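/- Let n ≥ 2 and let w: Ω → ℝ be a C² function on a bounded domain Ω ⊂ ℂⁿ whose complex Hessian has eigenvalues in the closed cone Γ̄_{n-1} at every point, and which satisfies σ_{n-1}(∂∂̄w) + σ_n(∂∂̄w) ≥ 0 in Ω. Let v be a continuous viscosity supersolution of σ_{n-1} + σ_n = 0 in Ω. If w ≤ v on ∂Ω, then w ≤ v in Ω. -/

import Mathlib

open Real Finset

/-- The `k`-th elementary symmetric polynomial of `x : Fin n → ℝ`. -/
def esymm (n k : ℕ) (x : Fin n → ℝ) : ℝ :=
  ∑ s ∈ (Finset.univ : Finset (Fin n)).powersetCard k, ∏ i ∈ s, x i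

/-- Second directional derivative of `f` at `z` in the (real) directions `v`, `w`. -/
noncomputable def d2 (n : ℕ) (f : (Fin n → ℂ) → ℝ) (z v w : Fin n → ℂ) : ℝ :=
  fderiv ℝ (fun y => fderiv ℝ f y v) z w

/-- The complex Hessian matrix `(∂²f/∂z_α ∂z̄_β)` of a real-valued function on `ℂⁿ`,
expressed through real second derivatives:
`f_{α β̄} = ¼ (f_{x_α x_β} + f_{y_α y_β}) + (i/4)(f_{x_α y_β} - f_{y_α x_β})`. -/
noncomputable def cHess (n : ℕ) (f : (Fin n → ℂ) → ℝ) (z : Fin n → ℂ) :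
    Matrix (Fin n) (Fin n) ℂ := fun α β =>
  (1 / 4 : ℂ) *
    (((d2 n f z (Pi.single α 1) (Pi.single β 1) +
        d2 n f z (Pi.single α Complex.I) (Pi.single β Complex.I) : ℝ) : ℂ) +
      Complex.I *
        ((d2 n f z (Pi.single α 1) (Pi.single β Complex.I) -
          d2 n f z (Pi.single α Complex.I) (Pi.single β 1) : ℝ) : ℂ))

/-- `v` is a viscosity supersolution of `σ_{n-1} + σ_n = 0` in `Ω`: for every `C²`
function `φ` which is `(n-1)`-admissible in `Ω` (eigenvalues of its complex Hessian in
`Γ̄_{n-1}`) and every local maximum point `z₀ ∈ Ω` of `φ - v` on `Ω`, one has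
`σ_{n-1}(∂∂̄φ(z₀)) + σ_n(∂∂̄φ(z₀)) ≤ 0`. -/
def IsViscositySupersolution (n : ℕ) (v : (Fin n → ℂ) → ℝ) (Ω : Set (Fin n → ℂ)) : Prop :=
  ∀ φ : (Fin n → ℂ) → ℝ, ContDiff ℝ 2 φ →
    (∀ z ∈ Ω, ∃ h : (cHess n φ z).IsHermitian,
      ∀ k : ℕ, 1 ≤ k → k ≤ n - 1 → 0 ≤ esymm n k h.eigenvalues) →
    ∀ z₀ ∈ Ω, IsLocalMaxOn (fun z => φ z - v z) Ω z₀ →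
      ∀ h₀ : (cHess n φ z₀).IsHermitian,
        esymm n (n - 1) h₀.eigenvalues + esymm n n h₀.eigenvalues ≤ 0

/-!
Suppose `w - v` takes a positive value `δ` at a point of `Ω`. For small `ε > 0` (with
`ε · sup_Ω |z|² < δ`) the perturbation `φ = w + ε|z|²` still has `φ - v < δ` on `∂Ω`, so `φ - v`
attains its maximum over `Ω̄` inside `Ω`. Since `∂∂̄φ = ∂∂̄w + ε I`, the function `φ` is
`(n-1)`-admissible with `σ_{n-1}(∂∂̄φ) + σ_n(∂∂̄φ) ≥ εⁿ > 0`, contradicting the supersolution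
property of `v` at that maximum.

For the algebra, put `p(t) = ∏ (t + λᵢ)`, whose coefficients are `σ_{n-j}(λ)`. Shifting `λ` by `ε`
replaces `p` by its Taylor expansion at `ε`; in particular
`σ_n(λ + ε) + σ_{n-1}(λ + ε) = (p + p')(ε)`, a polynomial with nonnegative coefficients and
leading coefficient one.
-/

namespace Polynomial

variable {R : Type*} [CommRing R] [LinearOrder R] [IsStrictOrderedRing R]

theorem eval_nonneg_of_coeff_nonneg {p : R[X]} (hp : ∀ j, 0 ≤ p.coeff j) {r : R} (hr : 0 ≤ r) :
    0 ≤ p.eval r := by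
  rw [eval_eq_sum_range]
  exact Finset.sum_nonneg fun j _ => mul_nonneg (hp j) (pow_nonneg hr j)

theorem taylor_coeff_nonneg {p : R[X]} {m : ℕ} (hp : ∀ j, m ≤ j → 0 ≤ p.coeff j) {r : R}
    (hr : 0 ≤ r) : 0 ≤ (taylor r p).coeff m := by
  rw [taylor_coeff]
  refine eval_nonneg_of_coeff_nonneg (fun j => ?_) hr
  rw [hasseDeriv_coeff]
  exact mul_nonneg (Nat.cast_nonneg _) (hp _ (Nat.le_add_left m j))

theorem pow_natDegree_le_taylor_coeff_zero_add_coeff_one {p : R[X]} (hp : p.Monic)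
    (hcoeff : ∀ j, 1 ≤ j → 0 ≤ p.coeff j) (h01 : 0 ≤ p.coeff 0 + p.coeff 1) {r : R}
    (hr : 0 ≤ r) : r ^ p.natDegree ≤ (taylor r p).coeff 0 + (taylor r p).coeff 1 := by
  set n := p.natDegree
  have hdeg : (p + derivative p).natDegree < n + 1 :=
    Nat.lt_succ_of_le <| natDegree_add_le_of_degree_le le_rfl
      ((natDegree_derivative_le p).trans (Nat.sub_le n 1))
  have hterm : ∀ j, 0 ≤ (p + derivative p).coeff j * r ^ j := fun j => by
    refine mul_nonneg ?_ (pow_nonneg hr j)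
    rw [coeff_add, coeff_derivative]
    rcases Nat.eq_zero_or_pos j with rfl | hj
    · simpa using h01
    · exact add_nonneg (hcoeff j hj) (mul_nonneg (hcoeff _ (by omega)) (by positivity))
  have hlead : (p + derivative p).coeff n = 1 := by
    rw [coeff_add, coeff_derivative, hp.coeff_natDegree,
      coeff_eq_zero_of_natDegree_lt (Nat.lt_succ_self n), zero_mul, add_zero]
  rw [taylor_coeff_zero, taylor_coeff_one, ← eval_add, eval_eq_sum_range' hdeg]
  calc r ^ n = (p + derivative p).coeff n * r ^ n := by rw [hlead, one_mul]
    _ ≤ _ := Finset.single_le_sum (fun j _ => hterm j) (Finset.self_mem_range_succ n)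

end Polynomial

def closedGardingCone (n k : ℕ) : Set (Fin n → ℝ) :=
  {x | ∀ j, 1 ≤ j → j ≤ k → 0 ≤ esymm n j x}

section Esymm

open Polynomial

variable {n : ℕ}

theorem esymm_eq_multiset_esymm (k : ℕ) (x : Fin n → ℝ) :
    esymm n k x = (Finset.univ.val.map x).esymm k :=
  (Finset.esymm_map_val x _ k).symm

theorem esymm_eq_zero_of_lt {k : ℕ} (hk : n < k) (x : Fin n → ℝ) : esymm n k x = 0 := by
  rw [esymm, Finset.powersetCard_eq_empty.mpr (by simpa using hk), Finset.sum_empty]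

theorem coeff_prod_X_add_C {j : ℕ} (hj : j ≤ n) (x : Fin n → ℝ) :
    (∏ i, (X + C (x i))).coeff j = esymm n (n - j) x := by
  rw [Finset.prod_X_add_C_coeff _ _ (by simpa using hj), esymm, Finset.card_univ,
    Fintype.card_fin]

theorem prod_X_add_C_add_const (x : Fin n → ℝ) (ε : ℝ) :
    ∏ i, (X + C (x i + ε)) = taylor ε (∏ i, (X + C (x i))) := by
  rw [← taylorAlgHom_apply, map_prod]
  refine Finset.prod_congr rfl fun i _ => ?_
  simp only [taylorAlgHom_apply, map_add, taylor_X, taylor_C]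
  ring

theorem esymm_add_const {k : ℕ} (hk : k ≤ n) (x : Fin n → ℝ) (ε : ℝ) :
    esymm n k (fun i => x i + ε) = (taylor ε (∏ i, (X + C (x i)))).coeff (n - k) := by
  rw [← prod_X_add_C_add_const, coeff_prod_X_add_C (Nat.sub_le n k), Nat.sub_sub_self hk]

theorem monic_prod_X_add_C (x : Fin n → ℝ) : (∏ i, (X + C (x i))).Monic :=
  monic_prod_of_monic _ _ fun i _ => monic_X_add_C (x i)

theorem natDegree_prod_X_add_C (x : Fin n → ℝ) : (∏ i, (X + C (x i))).natDegree = n := by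
  simp [natDegree_prod_of_monic _ _ fun i _ => monic_X_add_C (x i)]

theorem coeff_prod_X_add_C_nonneg {k : ℕ} {x : Fin n → ℝ} (hx : x ∈ closedGardingCone n k)
    {j : ℕ} (hj : n - k ≤ j) : 0 ≤ (∏ i, (X + C (x i))).coeff j := by
  rcases le_or_gt j n with hjn | hjn
  · rw [coeff_prod_X_add_C hjn]
    rcases Nat.eq_zero_or_pos (n - j) with h | h
    · simp [h, esymm]
    · exact hx _ h (by omega)
  · rw [coeff_eq_zero_of_natDegree_lt (by rwa [natDegree_prod_X_add_C])]

theorem add_const_mem_closedGardingCone {k : ℕ} {x : Fin n → ℝ} (hx : x ∈ closedGardingCone n k)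
    {ε : ℝ} (hε : 0 ≤ ε) : (fun i => x i + ε) ∈ closedGardingCone n k := by
  intro j hj1 hjk
  rcases le_or_gt j n with hjn | hjn
  · rw [esymm_add_const hjn]
    exact taylor_coeff_nonneg (fun i hi => coeff_prod_X_add_C_nonneg hx (by omega)) hε
  · rw [esymm_eq_zero_of_lt hjn]

theorem pow_le_esymm_pred_add_esymm_add_const (hn : 1 ≤ n) {x : Fin n → ℝ}
    (hx : x ∈ closedGardingCone n (n - 1)) (hx' : 0 ≤ esymm n (n - 1) x + esymm n n x)
    {ε : ℝ} (hε : 0 ≤ ε) :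
    ε ^ n ≤ esymm n (n - 1) (fun i => x i + ε) + esymm n n (fun i => x i + ε) := by
  rw [esymm_add_const (Nat.sub_le n 1), esymm_add_const le_rfl, Nat.sub_sub_self hn,
    Nat.sub_self, add_comm]
  have h01 : 0 ≤ (∏ i, (X + C (x i))).coeff 0 + (∏ i, (X + C (x i))).coeff 1 := by
    rwa [coeff_prod_X_add_C (Nat.zero_le n), coeff_prod_X_add_C hn, Nat.sub_zero, add_comm]
  simpa only [natDegree_prod_X_add_C] using
    pow_natDegree_le_taylor_coeff_zero_add_coeff_one (monic_prod_X_add_C x)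
    (fun j hj => coeff_prod_X_add_C_nonneg hx (by omega)) h01 hε

end Esymm

namespace Matrix.IsHermitian

open Polynomial

variable {𝕜 ι : Type*} [RCLike 𝕜] [Fintype ι] [DecidableEq ι] {A : Matrix ι ι 𝕜}

theorem map_eigenvalues_add_smul_one (hA : A.IsHermitian) (ε : ℝ)
    (hB : (A + (ε : 𝕜) • 1).IsHermitian) :
    Finset.univ.val.map hB.eigenvalues = Finset.univ.val.map (fun i => hA.eigenvalues i + ε) := by
  apply Multiset.map_injective (RCLike.ofReal_injective (K := 𝕜))
  have hshift : A + (ε : 𝕜) • 1 = A - scalar ι (-(ε : 𝕜)) := by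
    rw [scalar_apply, smul_one_eq_diagonal, ← diagonal_neg, sub_eq_add_neg, neg_neg]
  rw [Multiset.map_map, ← hB.roots_charpoly_eq_eigenvalues, hshift, charpoly_sub_scalar,
    hA.charpoly_eq, Polynomial.prod_comp]
  have hfactor : ∀ j, (X - C (hA.eigenvalues j : 𝕜)).comp (X + C (-(ε : 𝕜))) =
      X - C ((hA.eigenvalues j + ε : ℝ) : 𝕜) := fun j => by
    simp only [sub_comp, X_comp, C_comp, C_neg, RCLike.ofReal_add, C_add]
    ring
  have hprod : ∏ j, (X - C ((hA.eigenvalues j + ε : ℝ) : 𝕜)) =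
      ((Finset.univ.val.map fun j => ((hA.eigenvalues j + ε : ℝ) : 𝕜)).map (X - C ·)).prod := by
    rw [Multiset.map_map]
    rfl
  simp_rw [hfactor, hprod, roots_multiset_prod_X_sub_C, Multiset.map_map]
  rfl

end Matrix.IsHermitian

section ComplexHessian

variable {n : ℕ}

open ContinuousLinearMap

noncomputable def normSqSum (n : ℕ) (y : Fin n → ℂ) : ℝ := ∑ i, ‖y i‖ ^ 2

theorem normSqSum_nonneg (y : Fin n → ℂ) : 0 ≤ normSqSum n y :=
  Finset.sum_nonneg fun i _ => sq_nonneg ‖y i‖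

theorem contDiff_normSqSum : ContDiff ℝ 2 (normSqSum n) :=
  ContDiff.sum fun i _ => (contDiff_apply ℝ ℂ i).norm_sq ℝ

theorem fderiv_normSqSum_apply (y v : Fin n → ℂ) :
    fderiv ℝ (normSqSum n) y v = (∑ i, (2 : ℝ) • (innerSL ℝ (v i)).comp (proj i)) y := by
  have hderiv : HasFDerivAt (normSqSum n)
      (∑ i, (2 : ℕ) • (innerSL ℝ (y i)).comp (proj i)) y :=
    HasFDerivAt.fun_sum fun i _ => (hasFDerivAt_apply i y).norm_sq
  rw [hderiv.fderiv]
  simp [real_inner_comm, mul_add]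

theorem d2_normSqSum (z v u : Fin n → ℂ) :
    d2 n (normSqSum n) z v u = 2 * ∑ i, inner ℝ (v i) (u i) := by
  simp_rw [d2, fderiv_normSqSum_apply, ContinuousLinearMap.fderiv, Finset.mul_sum]
  simp

theorem d2_normSqSum_single (z : Fin n → ℂ) (α β : Fin n) (a b : ℂ) :
    d2 n (normSqSum n) z (Pi.single α a) (Pi.single β b) =
      if α = β then 2 * inner ℝ a b else 0 := by
  rw [d2_normSqSum]
  split_ifs with h
  · subst h
    rw [Finset.sum_eq_single α (fun i _ hi => by simp [hi]) (by simp)]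
    simp
  · refine mul_eq_zero_of_right 2 (Finset.sum_eq_zero fun i _ => ?_)
    rcases eq_or_ne i α with rfl | hi
    · simp [Pi.single_eq_of_ne h]
    · simp [Pi.single_eq_of_ne hi]

theorem cHess_normSqSum (z : Fin n → ℂ) : cHess n (normSqSum n) z = 1 := by
  ext α β
  simp only [cHess, d2_normSqSum_single]
  by_cases h : α = β
  · subst h
    norm_num
  · simp [h, Matrix.one_apply_ne h]

variable {f g : (Fin n → ℂ) → ℝ}

theorem differentiable_fderiv_apply (hf : ContDiff ℝ 2 f) (v : Fin n → ℂ) :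
    Differentiable ℝ (fun y => fderiv ℝ f y v) :=
  ((hf.fderiv_right le_rfl).clm_apply contDiff_const).differentiable one_ne_zero

theorem d2_add_const_mul (hf : ContDiff ℝ 2 f) (hg : ContDiff ℝ 2 g) (ε : ℝ) (z v u : Fin n → ℂ) :
    d2 n (fun y => f y + ε * g y) z v u = d2 n f z v u + ε * d2 n g z v u := by
  have hfderiv : (fun y => fderiv ℝ (fun y => f y + ε * g y) y v) =
      fun y => fderiv ℝ f y v + ε * fderiv ℝ g y v := by
    funext y
    have hgy := (hg.differentiable two_ne_zero) y
    rw [fderiv_fun_add ((hf.differentiable two_ne_zero) y) (hgy.const_mul ε),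
      fderiv_const_mul hgy]
    rfl
  have hg' := differentiable_fderiv_apply hg v z
  rw [d2, hfderiv, fderiv_fun_add (differentiable_fderiv_apply hf v z) (hg'.const_mul ε),
    fderiv_const_mul hg']
  rfl

theorem cHess_add_const_mul (hf : ContDiff ℝ 2 f) (hg : ContDiff ℝ 2 g) (ε : ℝ) (z : Fin n → ℂ) :
    cHess n (fun y => f y + ε * g y) z = cHess n f z + (ε : ℂ) • cHess n g z := by
  ext α β
  simp only [cHess, d2_add_const_mul hf hg, Matrix.add_apply, Matrix.smul_apply, smul_eq_mul]
  push_cast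
  ring

end ComplexHessian

theorem Matrix.IsHermitian.exists_esymm_add_smul_one_pos {n : ℕ} (hn : 1 ≤ n)
    {A : Matrix (Fin n) (Fin n) ℂ} (hA : A.IsHermitian)
    (hΓ : hA.eigenvalues ∈ closedGardingCone n (n - 1))
    (hA0 : 0 ≤ esymm n (n - 1) hA.eigenvalues + esymm n n hA.eigenvalues) {ε : ℝ} (hε : 0 < ε) :
    ∃ hB : (A + (ε : ℂ) • 1).IsHermitian, hB.eigenvalues ∈ closedGardingCone n (n - 1) ∧
      0 < esymm n (n - 1) hB.eigenvalues + esymm n n hB.eigenvalues := by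
  have hB : (A + (ε : ℂ) • 1).IsHermitian :=
    hA.add (Matrix.isHermitian_one.smul (Complex.conj_ofReal ε))
  have hshift : ∀ k, esymm n k hB.eigenvalues = esymm n k (fun i => hA.eigenvalues i + ε) :=
    fun k => by
      rw [esymm_eq_multiset_esymm, esymm_eq_multiset_esymm, hA.map_eigenvalues_add_smul_one ε hB]
  refine ⟨hB, fun k hk1 hk => ?_, ?_⟩
  · rw [hshift]
    exact add_const_mem_closedGardingCone hΓ hε.le k hk1 hk
  · rw [hshift, hshift]
    exact (pow_pos hε n).trans_le (pow_le_esymm_pred_add_esymm_add_const hn hΓ hA0 hε.le)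

theorem exists_mem_isMaxOn_closure_of_frontier_lt {E α : Type*} [TopologicalSpace E]
    [LinearOrder α] [TopologicalSpace α] [OrderClosedTopology α] {Ω : Set E} (hΩ : IsOpen Ω)
    (hK : IsCompact (closure Ω)) {f : E → α} (hf : ContinuousOn f (closure Ω)) {z : E}
    (hz : z ∈ Ω) (hfrontier : ∀ y ∈ frontier Ω, f y < f z) :
    ∃ z₀ ∈ Ω, IsMaxOn f (closure Ω) z₀ := by
  obtain ⟨z₀, hz₀, hmax⟩ := hK.exists_isMaxOn ⟨z, subset_closure hz⟩ hf
  refine ⟨z₀, ?_, hmax⟩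
  by_contra hz₀Ω
  have hz₀frontier : z₀ ∈ frontier Ω := ⟨hz₀, by rwa [hΩ.interior_eq]⟩
  exact (hfrontier z₀ hz₀frontier).not_ge (hmax (subset_closure hz))

theorem stmt_15 (n : ℕ) (hn : 2 ≤ n) (Ω : Set (Fin n → ℂ))
    (hΩo : IsOpen Ω) (hΩb : Bornology.IsBounded Ω)
    (w v : (Fin n → ℂ) → ℝ)
    (hw : ContDiff ℝ 2 w)
    (hwadm : ∀ z ∈ Ω, ∃ h : (cHess n w z).IsHermitian,
      (∀ k : ℕ, 1 ≤ k → k ≤ n - 1 → 0 ≤ esymm n k h.eigenvalues) ∧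
      0 ≤ esymm n (n - 1) h.eigenvalues + esymm n n h.eigenvalues)
    (hvc : ContinuousOn v (closure Ω))
    (hv : IsViscositySupersolution n v Ω)
    (hbdry : ∀ z ∈ frontier Ω, w z ≤ v z) :
    ∀ z ∈ Ω, w z ≤ v z := by
  intro z hz
  by_contra! hlt
  have hK : IsCompact (closure Ω) := hΩb.isCompact_closure
  obtain ⟨R, hR⟩ := hK.bddAbove_image contDiff_normSqSum.continuous.continuousOn
  obtain ⟨ε, hε, hεR⟩ := exists_pos_mul_lt (sub_pos.mpr hlt) R
  set φ := fun y => w y + ε * normSqSum n y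
  have hφ : ContDiff ℝ 2 φ := hw.add (contDiff_const.mul contDiff_normSqSum)
  have hφadm : ∀ y ∈ Ω, ∃ h : (cHess n φ y).IsHermitian,
      h.eigenvalues ∈ closedGardingCone n (n - 1) ∧
      0 < esymm n (n - 1) h.eigenvalues + esymm n n h.eigenvalues := fun y hy => by
    obtain ⟨hA, hΓ, hA0⟩ := hwadm y hy
    rw [cHess_add_const_mul hw contDiff_normSqSum, cHess_normSqSum]
    exact hA.exists_esymm_add_smul_one_pos (by omega) hΓ hA0 hε
  obtain ⟨z₀, hz₀, hmax⟩ := exists_mem_isMaxOn_closure_of_frontier_lt hΩo hK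
    (f := fun y => φ y - v y) (hφ.continuous.continuousOn.sub hvc) hz fun y hy => by
      have hεy := mul_le_mul_of_nonneg_left (hR ⟨y, frontier_subset_closure hy, rfl⟩) hε.le
      have hεz := mul_nonneg hε.le (normSqSum_nonneg z)
      linarith [hbdry y hy]
  obtain ⟨h₀, -, hpos⟩ := hφadm z₀ hz₀
  have hle := hv φ hφ (fun y hy => (hφadm y hy).imp fun _ => And.left) z₀ hz₀
    (hmax.on_subset subset_closure).localize h₀
  linarith
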